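/- Let x(S,T,a) = -3a - 6a(e^{-aS} + e^{-aT} - 3e^{-a(S+T)} + e^{-2a(S+T)})/((1-e^{-aS})(1-e^{-aT})(1-e^{-a(S+T)})) for a, S, T > 0. Then (1/3)·∂_S∂_T x(S,T,a) evaluated at T = S equals 2a³e^{-2aS}(1+e^{-2aS})/(1-e^{-2aS})³. -/

import Mathlib

/-!
With `φ(y) = 1/(e^{ay} - 1)`, the rational function of `u = e^{-aU}`, `t = e^{-aT}` in `x`
splits into partial fractions, giving `x(U,T) = -3a - 6a (φ(U) + φ(T) - φ(U+T))`. Hence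
`∂_U ∂_T x = 6a φ''(U+T)`, and `φ` solves the Riccati equation `φ' = -a φ (1 + φ)`, so
`φ'' = a² φ (1 + φ) (1 + 2φ)`. At `U + T = 2S` this is the claimed closed form, since
`φ(2S) = w / (1 - w)` with `w = e^{-2aS}`.
-/

open Real Filter Topology

noncomputable def invExpSubOne (a y : ℝ) : ℝ := (exp (a * y) - 1)⁻¹

lemma invExpSubOne_eq_exp_neg_div (a y : ℝ) :
    invExpSubOne a y = exp (-a * y) / (1 - exp (-a * y)) := by
  rw [invExpSubOne, neg_mul, exp_neg, div_eq_mul_inv, ← mul_inv, mul_sub, mul_one,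
    mul_inv_cancel₀ (exp_pos _).ne']

lemma hasDerivAt_invExpSubOne {a y : ℝ} (ha : a ≠ 0) (hy : y ≠ 0) :
    HasDerivAt (invExpSubOne a) (-a * (invExpSubOne a y * (1 + invExpSubOne a y))) y := by
  have hne : exp (a * y) - 1 ≠ 0 := sub_ne_zero.2 (by simpa using mul_ne_zero ha hy)
  refine (((hasDerivAt_id' y).const_mul a).exp.sub_const 1).fun_inv hne |>.congr_deriv ?_
  simp only [invExpSubOne]
  field_simp
  ring

lemma deriv_invExpSubOne_eventuallyEq {a y : ℝ} (ha : a ≠ 0) (hy : y ≠ 0) :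
    deriv (invExpSubOne a) =ᶠ[𝓝 y]
      fun z ↦ -a * (invExpSubOne a z * (1 + invExpSubOne a z)) := by
  filter_upwards [isOpen_ne.mem_nhds hy] with z hz
  exact (hasDerivAt_invExpSubOne ha hz).deriv

lemma hasDerivAt_deriv_invExpSubOne {a y : ℝ} (ha : a ≠ 0) (hy : y ≠ 0) :
    HasDerivAt (deriv (invExpSubOne a))
      (a ^ 2 * (invExpSubOne a y * (1 + invExpSubOne a y) * (1 + 2 * invExpSubOne a y))) y := by
  have hφ := hasDerivAt_invExpSubOne ha hy
  have h := (hφ.mul (hφ.const_add 1)).const_mul (-a)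
  refine (h.congr_of_eventuallyEq (deriv_invExpSubOne_eventuallyEq ha hy)).congr_deriv ?_
  ring

lemma rational_partial_fractions {u t : ℝ} (hu : u ≠ 1) (ht : t ≠ 1) (hut : u * t ≠ 1) :
    (u + t - 3 * (u * t) + (u * t) ^ 2) / ((1 - u) * (1 - t) * (1 - u * t)) =
      u / (1 - u) + t / (1 - t) - u * t / (1 - u * t) := by
  have hu' : 1 - u ≠ 0 := sub_ne_zero.2 hu.symm
  have ht' : 1 - t ≠ 0 := sub_ne_zero.2 ht.symm
  have hut' : 1 - u * t ≠ 0 := sub_ne_zero.2 hut.symm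
  field_simp
  ring

lemma scaling_eq_invExpSubOne {a U T : ℝ} (ha : a ≠ 0) (hU : U ≠ 0) (hT : T ≠ 0)
    (hUT : U + T ≠ 0) :
    -3 * a - 6 * a * (exp (-a * U) + exp (-a * T) - 3 * exp (-a * (U + T))
        + exp (-2 * a * (U + T))) /
      ((1 - exp (-a * U)) * (1 - exp (-a * T)) * (1 - exp (-a * (U + T)))) =
      -3 * a - 6 * a * (invExpSubOne a U + invExpSubOne a T - invExpSubOne a (U + T)) := by
  have exp_ne_one {y : ℝ} (hy : y ≠ 0) : exp (-a * y) ≠ 1 := by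
    simpa using mul_ne_zero (neg_ne_zero.2 ha) hy
  have hsum : exp (-a * (U + T)) = exp (-a * U) * exp (-a * T) := by
    rw [← exp_add]; ring_nf
  have hsum2 : exp (-2 * a * (U + T)) = (exp (-a * U) * exp (-a * T)) ^ 2 := by
    rw [← hsum, ← exp_nat_mul]; ring_nf
  have hUT' := exp_ne_one hUT
  rw [hsum] at hUT' ⊢
  simp only [invExpSubOne_eq_exp_neg_div, hsum, hsum2, mul_div_assoc,
    rational_partial_fractions (exp_ne_one hU) (exp_ne_one hT) hUT']

lemma deriv_deriv_eq_of_eq_sub_add {f : ℝ → ℝ → ℝ} {φ : ℝ → ℝ} {c k S : ℝ} (hS : 0 < S)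
    (hf : ∀ U T, 0 < U → 0 < T → f U T = c - k * (φ U + φ T - φ (U + T)))
    (hφ : ∀ y, 0 < y → DifferentiableAt ℝ φ y) (hφ' : DifferentiableAt ℝ (deriv φ) (S + S)) :
    deriv (fun U ↦ deriv (fun T ↦ f U T) S) S = k * deriv (deriv φ) (S + S) := by
  have inner : (fun U ↦ deriv (fun T ↦ f U T) S) =ᶠ[𝓝 S]
      fun U ↦ -k * (deriv φ S - deriv φ (U + S)) := by
    filter_upwards [Ioi_mem_nhds hS] with U (hU : 0 < U)
    have hfU : (fun T ↦ f U T) =ᶠ[𝓝 S] fun T ↦ c - k * (φ U + φ T - φ (U + T)) := by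
      filter_upwards [Ioi_mem_nhds hS] with T (hT : 0 < T)
      exact hf U T hU hT
    have hT := (hφ S hS).hasDerivAt
    have hUT := (hφ (U + S) (by linarith)).hasDerivAt.comp_const_add U S
    have hd : HasDerivAt (fun T ↦ c - k * (φ U + φ T - φ (U + T)))
        (-k * (deriv φ S - deriv φ (U + S))) S :=
      (((hT.const_add (φ U)).sub hUT).const_mul k).const_sub c |>.congr_deriv (by ring)
    rw [hfU.deriv_eq, hd.deriv]
  have outer := ((hφ'.hasDerivAt.comp_add_const S S).const_sub (deriv φ S)).const_mul (-k)
  rw [inner.deriv_eq, outer.deriv]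
  ring

theorem stmt_3 (a S : ℝ) (ha : 0 < a) (hS : 0 < S)
    (x : ℝ → ℝ → ℝ)
    (hx : ∀ U T : ℝ, x U T = -3 * a -
      6 * a * (Real.exp (-a * U) + Real.exp (-a * T) - 3 * Real.exp (-a * (U + T))
        + Real.exp (-2 * a * (U + T))) /
      ((1 - Real.exp (-a * U)) * (1 - Real.exp (-a * T)) * (1 - Real.exp (-a * (U + T))))) :
    (1 / 3) * deriv (fun U : ℝ => deriv (fun T : ℝ => x U T) S) S =
      2 * a ^ 3 * Real.exp (-2 * a * S) * (1 + Real.exp (-2 * a * S)) /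
        (1 - Real.exp (-2 * a * S)) ^ 3 := by
  have hS2 : S + S ≠ 0 := by positivity
  have hmixed := deriv_deriv_eq_of_eq_sub_add (φ := invExpSubOne a) hS
    (fun U T hU hT ↦ (hx U T).trans
      (scaling_eq_invExpSubOne ha.ne' hU.ne' hT.ne' (by positivity)))
    (fun y hy ↦ (hasDerivAt_invExpSubOne ha.ne' hy.ne').differentiableAt)
    (hasDerivAt_deriv_invExpSubOne ha.ne' hS2).differentiableAt
  have hφ : invExpSubOne a (S + S) = exp (-2 * a * S) / (1 - exp (-2 * a * S)) := by
    rw [invExpSubOne_eq_exp_neg_div]; ring_nf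
  have hw : 1 - exp (-2 * a * S) ≠ 0 :=
    sub_ne_zero.2 (exp_lt_one_iff.2 (by nlinarith)).ne'
  rw [hmixed, (hasDerivAt_deriv_invExpSubOne ha.ne' hS2).deriv, hφ]
  generalize exp (-2 * a * S) = w at hw ⊢
  field_simp
  ring
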